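/- Let h^{jk} be symmetric positive definite with ∑ h^{jk} ξ_j ξ_k ≥ h₀|ξ|², let λ > 0, α ∈ (0,1), μ₀ ≥ 4, ℓ_{x_j} = λ d_{x_j}, ℓ_tt = ℓ_ss = −2λα, Ψ = −λ∑(h^{jk}d_{x_j})_{x_k} + 2λ(1−α), and suppose the coercivity Condition 2.1(i) holds with constant μ₀. Define c^{jk} = ∑_{j',k'}[2h^{jk'}(h^{j'k}ℓ_{x_{j'}})_{x_{k'}} − (h^{jk}h^{j'k'}ℓ_{x_{j'}})_{x_{k'}}] + h^{jk}(ℓ_tt + ℓ_ss − Ψ). Then 2∑_{j,k} c^{jk} v_{x_j} v_{x_k} ≥ (2μ₀ − 8α − 4(1−α))λ ∑_{j,k} h^{jk} v_{x_j} v_{x_k} ≥ 4λ(1−α) h₀ |∇v|², for any vector (v_{x_1},...,v_{x_n}) ∈ ℝⁿ. -/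

import Mathlib

open scoped BigOperators

/-- Partial derivative in the `j`-th coordinate direction. -/
noncomputable def pd {n : ℕ} (j : Fin n) (f : (Fin n → ℝ) → ℝ) (x : Fin n → ℝ) : ℝ :=
  fderiv ℝ f x (Pi.single j 1)

/-- The pseudoconvexity quantity of Condition 2.1(i). -/
noncomputable def coercQ {n : ℕ} (h : Fin n → Fin n → (Fin n → ℝ) → ℝ)
    (d : (Fin n → ℝ) → ℝ) (x : Fin n → ℝ) (ξ : Fin n → ℝ) : ℝ :=
  ∑ j, ∑ k, (∑ j', ∑ k',
    (2 * h j k' x * pd k' (fun y => h j' k y * pd j' d y) x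
      - pd k' (h j k) x * (h j' k' x * pd j' d x))) * ξ j * ξ k

/-
With `ℓ = λ d`, the product rule turns each coefficient `c^{jk}` into `λ` times the integrand of
Condition 2.1(i) plus the term `-λ h^{jk} ∑ (h^{j'k'} d_{x_{j'}})_{x_{k'}}`, which cancels the
divergence part of `Ψ`. Hence `∑ c^{jk} v_j v_k = λ coercQ(v) - λ (4α + 2(1-α)) ∑ h^{jk} v_j v_k`,
and the condition `coercQ(ξ) ≥ μ₀ ∑ h^{jk} ξ_j ξ_k` gives the first bound; the second is
`2μ₀ - 8α - 4(1-α) ≥ 4(1-α)` for `μ₀ ≥ 4`, combined with the ellipticity of `h`.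
-/

section PartialDerivative

variable {n : ℕ}

lemma pd_mul (k : Fin n) {f g : (Fin n → ℝ) → ℝ} {x : Fin n → ℝ}
    (hf : DifferentiableAt ℝ f x) (hg : DifferentiableAt ℝ g x) :
    pd k (fun y => f y * g y) x = pd k f x * g x + f x * pd k g x := by
  simp only [pd, fderiv_fun_mul hf hg, add_apply, smul_apply, smul_eq_mul]
  ring

lemma pd_const_mul (k : Fin n) (c : ℝ) {f : (Fin n → ℝ) → ℝ} {x : Fin n → ℝ}
    (hf : DifferentiableAt ℝ f x) :
    pd k (fun y => c * f y) x = c * pd k f x := by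
  simp only [pd, fderiv_const_mul hf c, smul_apply, smul_eq_mul]

lemma differentiable_pd {f : (Fin n → ℝ) → ℝ} (hf : ContDiff ℝ 2 f) (j : Fin n) :
    Differentiable ℝ (pd j f) :=
  ((hf.fderiv_right (by norm_num)).clm_apply contDiff_const).differentiable one_ne_zero

end PartialDerivative

lemma sum_sum_add_mul_mul {n : ℕ} (a b : ℝ) (P H : Fin n → Fin n → ℝ) (v : Fin n → ℝ) :
    ∑ j, ∑ k, (a * P j k + b * H j k) * v j * v k
      = a * ∑ j, ∑ k, P j k * v j * v k + b * ∑ j, ∑ k, H j k * v j * v k := by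
  simp only [Finset.mul_sum, ← Finset.sum_add_distrib]
  exact Finset.sum_congr rfl fun _ _ => Finset.sum_congr rfl fun _ _ => by ring

section Coefficients

variable {n : ℕ} {h : Fin n → Fin n → (Fin n → ℝ) → ℝ} {d : (Fin n → ℝ) → ℝ} {x : Fin n → ℝ}

lemma coefficient_term_eq (hh : ∀ j k, DifferentiableAt ℝ (h j k) x)
    (hd : ∀ j, DifferentiableAt ℝ (pd j d) x) (lam : ℝ) (j k j' k' : Fin n) :
    2 * h j k' x * pd k' (fun y => h j' k y * (lam * pd j' d y)) x
        - pd k' (fun y => h j k y * h j' k' y * (lam * pd j' d y)) x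
      = lam * (2 * h j k' x * pd k' (fun y => h j' k y * pd j' d y) x
          - pd k' (h j k) x * (h j' k' x * pd j' d x))
        - lam * h j k x * pd k' (fun y => h j' k' y * pd j' d y) x := by
  have hprod : ∀ a b, DifferentiableAt ℝ (fun y => h a b y * pd j' d y) x :=
    fun a b => (hh a b).fun_mul (hd j')
  have e₁ : pd k' (fun y => h j' k y * (lam * pd j' d y)) x
      = lam * pd k' (fun y => h j' k y * pd j' d y) x := by
    simp only [mul_left_comm _ lam, pd_const_mul k' lam (hprod j' k)]
  have e₂ : pd k' (fun y => h j k y * h j' k' y * (lam * pd j' d y)) x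
      = lam * (pd k' (h j k) x * (h j' k' x * pd j' d x)
          + h j k x * pd k' (fun y => h j' k' y * pd j' d y) x) := by
    have hreassoc : (fun y => h j k y * h j' k' y * (lam * pd j' d y))
        = fun y => lam * (h j k y * (h j' k' y * pd j' d y)) := by
      funext y; ring
    rw [hreassoc, pd_const_mul k' lam ((hh j k).fun_mul (hprod j' k')),
      pd_mul k' (hh j k) (hprod j' k')]
  rw [e₁, e₂]
  ring

lemma coefficient_eq (hh : ∀ j k, DifferentiableAt ℝ (h j k) x)
    (hd : ∀ j, DifferentiableAt ℝ (pd j d) x) (lam α : ℝ) (j k : Fin n) :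
    (∑ j', ∑ k', (2 * h j k' x * pd k' (fun y => h j' k y * (lam * pd j' d y)) x
          - pd k' (fun y => h j k y * h j' k' y * (lam * pd j' d y)) x))
        + h j k x * ((-2 * lam * α) + (-2 * lam * α)
          - (-lam * ∑ j', ∑ k', pd k' (fun y => h j' k' y * pd j' d y) x
              + 2 * lam * (1 - α)))
      = lam * (∑ j', ∑ k', (2 * h j k' x * pd k' (fun y => h j' k y * pd j' d y) x
            - pd k' (h j k) x * (h j' k' x * pd j' d x)))
        + lam * (-4 * α - 2 * (1 - α)) * h j k x := by
  simp only [coefficient_term_eq hh hd, Finset.sum_sub_distrib, ← Finset.mul_sum]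
  ring

end Coefficients

theorem stmt_14_general {n : ℕ} (h : Fin n → Fin n → (Fin n → ℝ) → ℝ)
    (hh : ∀ j k, ContDiff ℝ 2 (h j k))
    (d : (Fin n → ℝ) → ℝ) (hd : ContDiff ℝ 2 d)
    (Ω : Set (Fin n → ℝ)) (h₀ μ₀ lam α : ℝ)
    (hh₀ : 0 < h₀) (hμ : 4 ≤ μ₀) (hlam : 0 < lam) (hα1 : α < 1)
    (hpos : ∀ x, ∀ ξ : Fin n → ℝ, h₀ * ∑ i, (ξ i) ^ 2 ≤ ∑ j, ∑ k, h j k x * ξ j * ξ k)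
    (hco : ∀ x ∈ Ω, ∀ ξ : Fin n → ℝ,
      μ₀ * ∑ j, ∑ k, h j k x * ξ j * ξ k ≤ coercQ h d x ξ) :
    ∀ x ∈ Ω, ∀ v : Fin n → ℝ,
      let Ψ : ℝ := -lam * ∑ j, ∑ k, pd k (fun y => h j k y * pd j d y) x
        + 2 * lam * (1 - α)
      let c : Fin n → Fin n → ℝ := fun j k =>
        (∑ j', ∑ k', (2 * h j k' x * pd k' (fun y => h j' k y * (lam * pd j' d y)) x
            - pd k' (fun y => h j k y * h j' k' y * (lam * pd j' d y)) x))
          + h j k x * ((-2 * lam * α) + (-2 * lam * α) - Ψ)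
      ((2 * μ₀ - 8 * α - 4 * (1 - α)) * lam * ∑ j, ∑ k, h j k x * v j * v k
          ≤ 2 * ∑ j, ∑ k, c j k * v j * v k) ∧
      (4 * lam * (1 - α) * h₀ * ∑ i, (v i) ^ 2
          ≤ (2 * μ₀ - 8 * α - 4 * (1 - α)) * lam * ∑ j, ∑ k, h j k x * v j * v k) := by
  intro x hx v
  dsimp only
  have hdh : ∀ j k, DifferentiableAt ℝ (h j k) x :=
    fun j k => ((hh j k).differentiable (by norm_num)).differentiableAt
  have hdd : ∀ j, DifferentiableAt ℝ (pd j d) x :=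
    fun j => (differentiable_pd hd j).differentiableAt
  simp only [coefficient_eq hdh hdd, sum_sum_add_mul_mul]
  set H := ∑ j, ∑ k, h j k x * v j * v k
  have hQ : μ₀ * H ≤ coercQ h d x v := hco x hx v
  have hH : h₀ * ∑ i, (v i) ^ 2 ≤ H := hpos x v
  have hH_nonneg : 0 ≤ H := (mul_nonneg hh₀.le (by positivity)).trans hH
  constructor
  · change _ ≤ 2 * (lam * coercQ h d x v + _)
    nlinarith [mul_le_mul_of_nonneg_left hQ hlam.le]
  · nlinarith [mul_nonneg (mul_nonneg hlam.le (sub_nonneg.2 hα1.le)) (sub_nonneg.2 hH),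
      mul_nonneg (mul_nonneg hlam.le hH_nonneg) (sub_nonneg.2 hμ)]

/-- Estimate (4.15): with `ℓ_{x_j} = λ d_{x_j}`, `ℓ_tt = ℓ_ss = −2λα`,
`Ψ = −λ∑(h^{jk}d_{x_j})_{x_k} + 2λ(1−α)`, and `c^{jk}` as in (3.2),
`2∑ c^{jk} v_{x_j} v_{x_k} ≥ (2μ₀ − 8α − 4(1−α)) λ ∑ h^{jk} v_{x_j} v_{x_k}
≥ 4λ(1−α) h₀ |∇v|²`. -/
theorem stmt_14 {n : ℕ} (h : Fin n → Fin n → (Fin n → ℝ) → ℝ)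
    (hh : ∀ j k, ContDiff ℝ 2 (h j k)) (hsym : ∀ j k x, h j k x = h k j x)
    (d : (Fin n → ℝ) → ℝ) (hd : ContDiff ℝ 2 d)
    (Ω : Set (Fin n → ℝ)) (h₀ μ₀ lam α : ℝ)
    (hh₀ : 0 < h₀) (hμ : 4 ≤ μ₀) (hlam : 0 < lam) (hα0 : 0 < α) (hα1 : α < 1)
    (hpos : ∀ x, ∀ ξ : Fin n → ℝ, h₀ * ∑ i, (ξ i) ^ 2 ≤ ∑ j, ∑ k, h j k x * ξ j * ξ k)
    (hco : ∀ x ∈ Ω, ∀ ξ : Fin n → ℝ,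
      μ₀ * ∑ j, ∑ k, h j k x * ξ j * ξ k ≤ coercQ h d x ξ) :
    ∀ x ∈ Ω, ∀ v : Fin n → ℝ,
      let Ψ : ℝ := -lam * ∑ j, ∑ k, pd k (fun y => h j k y * pd j d y) x
        + 2 * lam * (1 - α)
      let c : Fin n → Fin n → ℝ := fun j k =>
        (∑ j', ∑ k', (2 * h j k' x * pd k' (fun y => h j' k y * (lam * pd j' d y)) x
            - pd k' (fun y => h j k y * h j' k' y * (lam * pd j' d y)) x))
          + h j k x * ((-2 * lam * α) + (-2 * lam * α) - Ψ)
      ((2 * μ₀ - 8 * α - 4 * (1 - α)) * lam * ∑ j, ∑ k, h j k x * v j * v k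
          ≤ 2 * ∑ j, ∑ k, c j k * v j * v k) ∧
      (4 * lam * (1 - α) * h₀ * ∑ i, (v i) ^ 2
          ≤ (2 * μ₀ - 8 * α - 4 * (1 - α)) * lam * ∑ j, ∑ k, h j k x * v j * v k) :=
  stmt_14_general h hh d hd Ω h₀ μ₀ lam α hh₀ hμ hlam hα1 hpos hco
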